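/- For every d×d complex matrix ρ, Tr₂[ Π_+ (ρ ⊗ I₂/2) Π_+ + Π_− (ρ ⊗ I₂/2) Π_− ] = (½ + 1/(2(2j+1)²)) ρ + (2j(j+1)/(2j+1)²) ζ(ρ), where Tr₂ denotes the partial trace over the second (spin-½) factor, defined by (Tr₂ M)_{a,b} = Σ_c M_{(a,c),(b,c)}. -/

import Mathlib

open Matrix Complex Kronecker
open scoped ComplexOrder

noncomputable section

/-- spin value j = (d-1)/2 -/
def jr (d : ℕ) : ℝ := ((d : ℝ) - 1) / 2

/-- λ = j(j+1) = (d²-1)/4 -/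
def lam (d : ℕ) : ℝ := ((d : ℝ) ^ 2 - 1) / 4

/-- angular momentum operator J_z -/
def Jz (d : ℕ) : Matrix (Fin d) (Fin d) ℂ :=
  Matrix.diagonal (fun m => ((m : ℂ) - ((d : ℂ) - 1) / 2))

/-- raising operator J_+ -/
def Jp (d : ℕ) : Matrix (Fin d) (Fin d) ℂ :=
  Matrix.of (fun a b : Fin d =>
    if (a : ℕ) = (b : ℕ) + 1 then
      (Real.sqrt (((b : ℕ) + 1) * ((d : ℝ) - 1 - (b : ℕ))) : ℂ)
    else 0)

/-- lowering operator J_- -/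
def Jm (d : ℕ) : Matrix (Fin d) (Fin d) ℂ := (Jp d)ᴴ

/-- J_x -/
def Jx (d : ℕ) : Matrix (Fin d) (Fin d) ℂ := (2 : ℂ)⁻¹ • (Jp d + Jm d)

/-- J_y -/
def Jy (d : ℕ) : Matrix (Fin d) (Fin d) ℂ := (2 * Complex.I)⁻¹ • (Jp d - Jm d)

/-- the superoperator ζ -/
def zeta (d : ℕ) (X : Matrix (Fin d) (Fin d) ℂ) : Matrix (Fin d) (Fin d) ℂ :=
  ((lam d : ℂ))⁻¹ • (Jx d * X * Jx d + Jy d * X * Jy d + Jz d * X * Jz d)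

/-- n-fold composition ζ^∘n -/
def zetaIter (d : ℕ) (n : ℕ) (X : Matrix (Fin d) (Fin d) ℂ) : Matrix (Fin d) (Fin d) ℂ :=
  (zeta d)^[n] X

/-- rotation e^{-iθ J} -/
def rot (d : ℕ) (K : Matrix (Fin d) (Fin d) ℂ) (θ : ℝ) : Matrix (Fin d) (Fin d) ℂ :=
  NormedSpace.exp ((-Complex.I * (θ : ℂ)) • K)

/-- rotation covariance of a linear map with respect to all three generators -/
def RotCovariant (d : ℕ)
    (ξ : Matrix (Fin d) (Fin d) ℂ →ₗ[ℂ] Matrix (Fin d) (Fin d) ℂ) : Prop :=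
  ∀ K ∈ ({Jx d, Jy d, Jz d} : Set (Matrix (Fin d) (Fin d) ℂ)), ∀ (θ : ℝ),
    ∀ X : Matrix (Fin d) (Fin d) ℂ,
      ξ (rot d K θ * X * rot d K (-θ)) = rot d K θ * ξ X * rot d K (-θ)

/-- positivity of a map -/
def PosMap (d : ℕ)
    (ξ : Matrix (Fin d) (Fin d) ℂ →ₗ[ℂ] Matrix (Fin d) (Fin d) ℂ) : Prop :=
  ∀ X : Matrix (Fin d) (Fin d) ℂ, X.PosSemidef → (ξ X).PosSemidef

end

/-- total angular momentum squared 𝒥² on ℂ^d ⊗ ℂ² -/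
noncomputable def J2half (d : ℕ) : Matrix (Fin d × Fin 2) (Fin d × Fin 2) ℂ :=
  (Jx d ⊗ₖ (1 : Matrix (Fin 2) (Fin 2) ℂ) + (1 : Matrix (Fin d) (Fin d) ℂ) ⊗ₖ Jx 2) ^ 2
  + (Jy d ⊗ₖ (1 : Matrix (Fin 2) (Fin 2) ℂ) + (1 : Matrix (Fin d) (Fin d) ℂ) ⊗ₖ Jy 2) ^ 2
  + (Jz d ⊗ₖ (1 : Matrix (Fin 2) (Fin 2) ℂ) + (1 : Matrix (Fin d) (Fin d) ℂ) ⊗ₖ Jz 2) ^ 2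

/-- projector onto total angular momentum j + 1/2 -/
noncomputable def PiPlus (d : ℕ) : Matrix (Fin d × Fin 2) (Fin d × Fin 2) ℂ :=
  ((2 * jr d + 1 : ℝ) : ℂ)⁻¹ •
    (J2half d - (((jr d - 1 / 2) * (jr d + 1 / 2) : ℝ) : ℂ) •
      (1 : Matrix (Fin d × Fin 2) (Fin d × Fin 2) ℂ))

/-- projector onto total angular momentum j - 1/2 -/
noncomputable def PiMinus (d : ℕ) : Matrix (Fin d × Fin 2) (Fin d × Fin 2) ℂ :=
  1 - PiPlus d

/-- partial trace over the second factor -/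
noncomputable def ptrace2 (d : ℕ) (M : Matrix (Fin d × Fin 2) (Fin d × Fin 2) ℂ) :
    Matrix (Fin d) (Fin d) ℂ :=
  Matrix.of (fun a b : Fin d => ∑ c : Fin 2, M (a, c) (b, c))


/-!
With `U = 2Π₊ - 1` one has `Π₊ M Π₊ + Π₋ M Π₋ = (M + U M U) / 2` for any `M`. Expanding the squares
in `𝒥²` gives `𝒥² = (λ + 3/4) + 2 J·K`, hence `U = (1 + 4 J·K) / (2j + 1)`. The spin-½ matrices
`K_k` are traceless with `Tr (K_k K_l) = δ_kl / 2`, so all cross terms die under `Tr₂` and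
`Tr₂ (U (ρ ⊗ I/2) U) = (ρ + 4 Σ_k J_k ρ J_k) / (2j + 1)²`, where `Σ_k J_k ρ J_k = λ ζ(ρ)`.
-/

open Finset

lemma Fin.sum_ite_val_eq {M : Type*} [AddCommMonoid M] {d : ℕ} (k : ℕ) (f : Fin d → M) :
    ∑ c : Fin d, (if (c : ℕ) = k then f c else 0) = if h : k < d then f ⟨k, h⟩ else 0 := by
  split_ifs with h
  · simp_rw [← Fin.ext_iff (b := ⟨k, h⟩), sum_ite_eq', mem_univ, if_true]
  · exact sum_eq_zero fun c _ => if_neg (by omega)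

lemma mul_mul_add_one_sub_mul_mul {𝕜 A : Type*} [Field 𝕜] [NeZero (2 : 𝕜)] [Ring A]
    [Algebra 𝕜 A] (P M : A) :
    P * M * P + (1 - P) * M * (1 - P)
      = (2 : 𝕜)⁻¹ • (M + ((2 : 𝕜) • P - 1) * M * ((2 : 𝕜) • P - 1)) := by
  rw [eq_inv_smul_iff₀ two_ne_zero, two_smul, two_smul]
  noncomm_ring

lemma Matrix.sum_kronecker {R ι l m n p : Type*} [CommSemiring R] (s : Finset ι)
    (A : ι → Matrix l m R) (B : Matrix n p R) : (∑ i ∈ s, A i) ⊗ₖ B = ∑ i ∈ s, A i ⊗ₖ B :=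
  map_sum ((kroneckerBilinear (R := R)).flip B) A s

lemma Matrix.kronecker_sum {R ι l m n p : Type*} [CommSemiring R] (s : Finset ι)
    (A : Matrix l m R) (B : ι → Matrix n p R) : A ⊗ₖ (∑ i ∈ s, B i) = ∑ i ∈ s, A ⊗ₖ B i :=
  map_sum (kroneckerBilinear (R := R) A) B s

lemma Matrix.kronecker_one_add_one_kronecker_sq {R l n : Type*} [CommRing R] [Fintype l]
    [DecidableEq l] [Fintype n] [DecidableEq n] (A : Matrix l l R) (B : Matrix n n R) :
    (A ⊗ₖ (1 : Matrix n n R) + (1 : Matrix l l R) ⊗ₖ B) ^ 2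
      = (A * A) ⊗ₖ 1 + (2 : R) • (A ⊗ₖ B) + 1 ⊗ₖ (B * B) := by
  simp only [sq, add_mul, mul_add, ← mul_kronecker_mul, Matrix.mul_one, Matrix.one_mul, two_smul]
  abel

lemma sqrt_Jp_weight_mul_self {d m : ℕ} (hm : m < d) :
    (√((m + 1) * ((d : ℝ) - 1 - m)) : ℂ) * √((m + 1) * ((d : ℝ) - 1 - m))
      = (m + 1) * ((d : ℂ) - 1 - m) := by
  have : (m : ℝ) + 1 ≤ d := by exact_mod_cast hm
  rw [← ofReal_mul, Real.mul_self_sqrt (by nlinarith)]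
  push_cast
  ring

lemma Jm_mul_Jp (d : ℕ) :
    Jm d * Jp d = diagonal (fun a : Fin d => ((a : ℂ) + 1) * ((d : ℂ) - 1 - a)) := by
  ext a b
  simp only [Jm, Jp, mul_apply, conjTranspose_apply, of_apply, apply_ite (star : ℂ → ℂ),
    star_zero, RCLike.star_def, conj_ofReal, ite_mul, zero_mul, Fin.sum_ite_val_eq,
    add_left_inj, Fin.val_inj, mul_ite, mul_zero]
  obtain rfl | hab := eq_or_ne a b
  · rw [diagonal_apply_eq, if_pos rfl, sqrt_Jp_weight_mul_self a.isLt]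
    split_ifs with h
    · rfl
    · rw [show (d : ℂ) = a + 1 by exact_mod_cast (by omega : d = a + 1)]
      ring
  · simp [hab, Ne.symm hab]

lemma Jp_mul_Jm (d : ℕ) :
    Jp d * Jm d = diagonal (fun a : Fin d => (a : ℂ) * ((d : ℂ) - a)) := by
  ext a b
  have hpred : ∀ c : Fin d, (a : ℕ) = c + 1 ↔ (a : ℕ) ≠ 0 ∧ (c : ℕ) = a - 1 := by omega
  simp only [Jm, Jp, mul_apply, conjTranspose_apply, of_apply, apply_ite (star : ℂ → ℂ),
    star_zero, RCLike.star_def, conj_ofReal, ite_mul, zero_mul, hpred, ite_and,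
    sum_ite_irrel, Fin.sum_ite_val_eq, sum_const_zero]
  obtain rfl | hab := eq_or_ne a b
  · rw [diagonal_apply_eq]
    split_ifs with h0 h1 h2 <;> try omega
    · rw [sqrt_Jp_weight_mul_self h1, Nat.cast_sub (by omega)]
      push_cast
      ring
    · simp [not_not.mp h0]
  · rw [diagonal_apply_ne _ hab]
    split_ifs with h0 h1 h2 <;> try rfl
    · exact absurd (Fin.ext (by omega)) hab
    · exact mul_zero _

noncomputable def Jvec (d : ℕ) : Fin 3 → Matrix (Fin d) (Fin d) ℂ := ![Jx d, Jy d, Jz d]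

lemma Jx_mul_Jx_add_Jy_mul_Jy (d : ℕ) :
    Jx d * Jx d + Jy d * Jy d = (2 : ℂ)⁻¹ • (Jp d * Jm d + Jm d * Jp d) := by
  have hI : (2 * I)⁻¹ * (2 * I)⁻¹ = -(4 : ℂ)⁻¹ := by
    rw [← mul_inv, mul_mul_mul_comm, I_mul_I]
    norm_num
  simp only [Jx, Jy, smul_mul_smul_comm, hI, add_mul, mul_add, sub_mul, mul_sub]
  module

lemma sum_Jvec_mul_self (d : ℕ) : ∑ k, Jvec d k * Jvec d k = (lam d : ℂ) • 1 := by
  simp only [Fin.sum_univ_three, Jvec, Matrix.cons_val, Jx_mul_Jx_add_Jy_mul_Jy, Jp_mul_Jm,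
    Jm_mul_Jp, Jz, diagonal_mul_diagonal, diagonal_add, ← diagonal_smul, ← diagonal_one]
  congr 1
  ext a
  simp only [Pi.smul_apply, smul_eq_mul, lam]
  push_cast
  ring

lemma Jx_two : Jx 2 = !![0, 2⁻¹; 2⁻¹, 0] := by
  ext a b
  fin_cases a <;> fin_cases b <;> norm_num [Jx, Jp, Jm]

lemma Jy_two : Jy 2 = !![0, I / 2; -(I / 2), 0] := by
  ext a b
  fin_cases a <;> fin_cases b <;> norm_num [Jy, Jp, Jm] <;> field_simp

lemma Jz_two : Jz 2 = !![-2⁻¹, 0; 0, 2⁻¹] := by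
  ext a b
  fin_cases a <;> fin_cases b <;> norm_num [Jz]

lemma trace_Jvec_two (k : Fin 3) : (Jvec 2 k).trace = 0 := by
  fin_cases k <;> simp [Jvec, Jx_two, Jy_two, Jz_two, trace_fin_two]

lemma trace_Jvec_two_mul (k l : Fin 3) :
    (Jvec 2 k * Jvec 2 l).trace = if k = l then 2⁻¹ else 0 := by
  fin_cases k <;> fin_cases l <;>
    norm_num [Jvec, Jx_two, Jy_two, Jz_two, trace_fin_two, div_mul_div_comm]

lemma two_mul_jr_add_one (d : ℕ) : 2 * jr d + 1 = d := by
  rw [jr]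
  ring

lemma jr_mul_jr_add_one (d : ℕ) : jr d * (jr d + 1) = lam d := by
  rw [jr, lam]
  ring

lemma lam_ne_zero {d : ℕ} (hd : 2 ≤ d) : lam d ≠ 0 := by
  have : (2 : ℝ) ≤ d := by exact_mod_cast hd
  rw [lam]
  nlinarith

noncomputable def spinOrbit (d : ℕ) : Matrix (Fin d × Fin 2) (Fin d × Fin 2) ℂ :=
  ∑ k, Jvec d k ⊗ₖ Jvec 2 k

lemma J2half_eq (d : ℕ) :
    J2half d = ((lam d + lam 2 : ℝ) : ℂ) • 1 + (2 : ℂ) • spinOrbit d := by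
  have hsum : J2half d
      = ∑ k, (Jvec d k ⊗ₖ (1 : Matrix (Fin 2) (Fin 2) ℂ) + 1 ⊗ₖ Jvec 2 k) ^ 2 := by
    simp [J2half, Fin.sum_univ_three, Jvec]
  simp only [hsum, kronecker_one_add_one_kronecker_sq, sum_add_distrib, ← smul_sum, spinOrbit,
    ← sum_kronecker, ← kronecker_sum, sum_Jvec_mul_self, smul_kronecker, kronecker_smul,
    one_kronecker_one, ofReal_add, add_smul]
  abel

lemma two_smul_PiPlus_sub_one {d : ℕ} (hd : d ≠ 0) :
    (2 : ℂ) • PiPlus d - 1 = (d : ℂ)⁻¹ • (1 + (4 : ℂ) • spinOrbit d) := by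
  have hdC : (d : ℂ) ≠ 0 := Nat.cast_ne_zero.mpr hd
  rw [PiPlus, J2half_eq, two_mul_jr_add_one, ← jr_mul_jr_add_one,
    show lam 2 = 3 / 4 by norm_num [lam]]
  simp only [jr]
  match_scalars <;> field_simp <;> ring

section PartialTrace

variable {d : ℕ}

lemma ptrace2_add (M N : Matrix (Fin d × Fin 2) (Fin d × Fin 2) ℂ) :
    ptrace2 d (M + N) = ptrace2 d M + ptrace2 d N := by
  ext a b
  simp [ptrace2, sum_add_distrib]

lemma ptrace2_smul (c : ℂ) (M : Matrix (Fin d × Fin 2) (Fin d × Fin 2) ℂ) :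
    ptrace2 d (c • M) = c • ptrace2 d M := by
  ext a b
  simp only [ptrace2, of_apply, Matrix.smul_apply, smul_eq_mul, mul_sum]

lemma ptrace2_sum {ι : Type*} (s : Finset ι)
    (M : ι → Matrix (Fin d × Fin 2) (Fin d × Fin 2) ℂ) :
    ptrace2 d (∑ i ∈ s, M i) = ∑ i ∈ s, ptrace2 d (M i) := by
  ext a b
  simp only [ptrace2, of_apply, Matrix.sum_apply]
  exact sum_comm

lemma ptrace2_kronecker (A : Matrix (Fin d) (Fin d) ℂ) (B : Matrix (Fin 2) (Fin 2) ℂ) :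
    ptrace2 d (A ⊗ₖ B) = B.trace • A := by
  ext a b
  simp only [ptrace2, of_apply, kroneckerMap_apply, Matrix.smul_apply, smul_eq_mul, trace,
    Matrix.diag, sum_mul]
  exact sum_congr rfl fun c _ => mul_comm _ _

lemma ptrace2_kronecker_mul_mul (A ρ C : Matrix (Fin d) (Fin d) ℂ)
    (B E D : Matrix (Fin 2) (Fin 2) ℂ) :
    ptrace2 d ((A ⊗ₖ B) * (ρ ⊗ₖ E) * (C ⊗ₖ D)) = (B * E * D).trace • (A * ρ * C) := by
  rw [← mul_kronecker_mul, ← mul_kronecker_mul, ptrace2_kronecker]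

end PartialTrace

lemma ptrace2_sandwich_spinOrbit (d : ℕ) (ρ : Matrix (Fin d) (Fin d) ℂ) :
    ptrace2 d ((1 + (4 : ℂ) • spinOrbit d)
        * (ρ ⊗ₖ ((2 : ℂ)⁻¹ • (1 : Matrix (Fin 2) (Fin 2) ℂ))) * (1 + (4 : ℂ) • spinOrbit d))
      = ρ + (4 : ℂ) • ∑ k, Jvec d k * ρ * Jvec d k := by
  rw [← one_kronecker_one]
  simp only [spinOrbit, add_mul, mul_add, Matrix.smul_mul, Matrix.mul_smul, sum_mul, mul_sum,
    ptrace2_add, ptrace2_smul, ptrace2_sum, ptrace2_kronecker_mul_mul, Matrix.one_mul,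
    Matrix.mul_one, trace_smul, trace_Jvec_two, trace_Jvec_two_mul, trace_one]
  simp only [smul_zero, zero_smul, sum_const_zero, add_zero, smul_ite, ite_smul, sum_ite_eq',
    mem_univ, if_true, Fintype.card_fin, smul_sum, smul_smul]
  norm_num

lemma sum_Jvec_mul_mul_Jvec {d : ℕ} (hd : lam d ≠ 0) (X : Matrix (Fin d) (Fin d) ℂ) :
    ∑ k, Jvec d k * X * Jvec d k = (lam d : ℂ) • zeta d X := by
  rw [zeta, smul_inv_smul₀ (ofReal_ne_zero.mpr hd)]
  simp [Fin.sum_univ_three, Jvec]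

theorem stmt_17 (d : ℕ) (hd : 2 ≤ d) (ρ : Matrix (Fin d) (Fin d) ℂ) :
    ptrace2 d
      (PiPlus d * (ρ ⊗ₖ ((2 : ℂ)⁻¹ • (1 : Matrix (Fin 2) (Fin 2) ℂ))) * PiPlus d
       + PiMinus d * (ρ ⊗ₖ ((2 : ℂ)⁻¹ • (1 : Matrix (Fin 2) (Fin 2) ℂ))) * PiMinus d)
    = ((1 / 2 + 1 / (2 * (2 * jr d + 1) ^ 2) : ℝ) : ℂ) • ρ
      + ((2 * jr d * (jr d + 1) / (2 * jr d + 1) ^ 2 : ℝ) : ℂ) • zeta d ρ := by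
  have hdC : (d : ℂ) ≠ 0 := Nat.cast_ne_zero.mpr (by omega)
  rw [PiMinus, mul_mul_add_one_sub_mul_mul (𝕜 := ℂ), two_smul_PiPlus_sub_one (by omega)]
  simp only [Matrix.smul_mul, Matrix.mul_smul, smul_smul]
  rw [ptrace2_smul, ptrace2_add, ptrace2_smul, ptrace2_sandwich_spinOrbit,
    sum_Jvec_mul_mul_Jvec (lam_ne_zero hd), ptrace2_kronecker, trace_smul, trace_one,
    Fintype.card_fin, mul_assoc, two_mul_jr_add_one, jr_mul_jr_add_one]
  push_cast
  match_scalars <;> field_simp <;> ring
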